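/- arXiv:1301.0501 — 2 statements merged into one kernel-verified Lean document; each statement's English description precedes it below -/
import Mathlib

section
/- Let μ be a finite Borel measure on the unit circle with Carathéodory function F, and let β ∈ (0,1] and C > 0. Suppose Re F((1-ε)e^{iΘ}) ≤ C·ε^{β-1} for all sufficiently small ε > 0 and all Θ in some closed set S of angles. Then there is a constant C' such that μ of every arc of angular radius ε centered at a point of S is at most C'·ε^β; i.e., μ is uniformly β-Hölder continuous on S. -/
/-!
`Re F((1 - ε)e^{iΘ})` is the integral against `μ` of the Poisson kernel of `w = (1 - ε)e^{iΘ}`.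
On the arc `|t - Θ| ≤ ε` that kernel is at least `1 / (2ε)`: its numerator `1 - |w|²` is at least
`ε`, and `|e^{it} - w|² = ε² + 2(1 - ε)(1 - cos (t - Θ)) ≤ 2ε²`. Markov's inequality then gives
`μ(arc) ≤ 2ε · Re F(w) ≤ 2C ε^β`.
-/

open Complex MeasureTheory Metric

lemma herglotzRieszKernel_zero_apply (w z : ℂ) :
    herglotzRieszKernel 0 w z = (z + w) / (z - w) := by
  simp only [herglotzRieszKernel_def, sub_zero]

lemma poissonKernel_zero_exp (w : ℂ) (t : ℝ) :
    poissonKernel 0 w (exp (t * I)) = (1 - ‖w‖ ^ 2) / ‖exp (t * I) - w‖ ^ 2 := by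
  simp only [poissonKernel_def, sub_zero, norm_exp_ofReal_mul_I, one_pow]

lemma poissonKernel_zero_exp_nonneg {w : ℂ} (hw : ‖w‖ ≤ 1) (t : ℝ) :
    0 ≤ poissonKernel 0 w (exp (t * I)) := by
  rw [poissonKernel_zero_exp]
  have : ‖w‖ ^ 2 ≤ 1 := pow_le_one₀ (norm_nonneg w) hw
  exact div_nonneg (by linarith) (by positivity)

lemma norm_herglotzRieszKernel_zero_le {w z : ℂ} (hw : ‖w‖ < 1) (hz : ‖z‖ = 1) :
    ‖herglotzRieszKernel 0 w z‖ ≤ 2 / (1 - ‖w‖) := by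
  rw [herglotzRieszKernel_zero_apply, norm_div]
  have hnum : ‖z + w‖ ≤ 2 := by linarith [norm_add_le z w]
  have hden : 1 - ‖w‖ ≤ ‖z - w‖ := by simpa only [hz] using norm_sub_norm_le z w
  exact div_le_div₀ zero_le_two hnum (by linarith) hden

lemma continuous_herglotzRieszKernel_zero_exp {w : ℂ} (hw : ‖w‖ < 1) :
    Continuous fun t : ℝ ↦ herglotzRieszKernel 0 w (exp (t * I)) := by
  have hne (t : ℝ) : exp (t * I) - w ≠ 0 := by
    rw [sub_ne_zero]
    rintro rfl
    simp at hw
  simp only [herglotzRieszKernel_zero_apply]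
  fun_prop (disch := exact hne _)

lemma integrable_herglotzRieszKernel_zero_exp (μ : Measure ℝ) [IsFiniteMeasure μ] {w : ℂ}
    (hw : ‖w‖ < 1) : Integrable (fun t : ℝ ↦ herglotzRieszKernel 0 w (exp (t * I))) μ :=
  .of_bound (continuous_herglotzRieszKernel_zero_exp hw).aestronglyMeasurable _
    (.of_forall fun t ↦ norm_herglotzRieszKernel_zero_le hw (norm_exp_ofReal_mul_I t))

lemma integrable_poissonKernel_zero_exp (μ : Measure ℝ) [IsFiniteMeasure μ] {w : ℂ}
    (hw : ‖w‖ < 1) : Integrable (fun t : ℝ ↦ poissonKernel 0 w (exp (t * I))) μ := by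
  simpa only [poissonKernel_eq_re_herglotzRieszKernel, Function.comp_apply, RCLike.re_to_complex] using
    (integrable_herglotzRieszKernel_zero_exp μ hw).re

lemma re_integral_herglotzRieszKernel_zero_exp (μ : Measure ℝ) [IsFiniteMeasure μ] {w : ℂ}
    (hw : ‖w‖ < 1) :
    (∫ t, herglotzRieszKernel 0 w (exp (t * I)) ∂μ).re =
      ∫ t, poissonKernel 0 w (exp (t * I)) ∂μ := by
  simpa only [poissonKernel_eq_re_herglotzRieszKernel, Function.comp_apply, RCLike.re_to_complex] using
    (integral_re (integrable_herglotzRieszKernel_zero_exp μ hw)).symm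

lemma norm_exp_sub_ofReal_mul_exp_sq (r t Θ : ℝ) :
    ‖exp (t * I) - r * exp (Θ * I)‖ ^ 2 = (1 - r) ^ 2 + 2 * r * (1 - Real.cos (t - Θ)) := by
  rw [← normSq_eq_norm_sq, normSq_apply, Real.cos_sub]
  simp only [sub_re, sub_im, re_ofReal_mul, im_ofReal_mul, exp_ofReal_mul_I_re,
    exp_ofReal_mul_I_im]
  linear_combination Real.sin_sq_add_cos_sq t + r ^ 2 * Real.sin_sq_add_cos_sq Θ

lemma norm_exp_sub_ofReal_mul_exp_sq_le {r : ℝ} (hr : 0 ≤ r) (t Θ : ℝ) :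
    ‖exp (t * I) - r * exp (Θ * I)‖ ^ 2 ≤ (1 - r) ^ 2 + r * (t - Θ) ^ 2 := by
  rw [norm_exp_sub_ofReal_mul_exp_sq]
  nlinarith [Real.one_sub_sq_div_two_le_cos (x := t - Θ)]

lemma norm_one_sub_mul_exp {ε : ℝ} (hε : ε ≤ 1) (Θ : ℝ) :
    ‖(1 - ε) * exp (Θ * I)‖ = 1 - ε := by
  rw [norm_mul, norm_exp_ofReal_mul_I, mul_one, ← ofReal_one, ← ofReal_sub, norm_real,
    Real.norm_of_nonneg (by linarith)]

lemma inv_two_mul_le_poissonKernel {ε t Θ : ℝ} (hε : 0 < ε) (hε1 : ε ≤ 1) (ht : |t - Θ| ≤ ε) :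
    (2 * ε)⁻¹ ≤ poissonKernel 0 ((1 - ε) * exp (Θ * I)) (exp (t * I)) := by
  have hden : ‖exp (t * I) - (1 - ε) * exp (Θ * I)‖ ^ 2 ≤ 2 * ε ^ 2 := by
    have hsq : (t - Θ) ^ 2 ≤ ε ^ 2 := sq_le_sq' (abs_le.1 ht).1 (abs_le.1 ht).2
    have := norm_exp_sub_ofReal_mul_exp_sq_le (r := 1 - ε) (by linarith) t Θ
    push_cast at this
    nlinarith
  have hden_pos : ε ≤ ‖exp (t * I) - (1 - ε) * exp (Θ * I)‖ := by
    have := norm_sub_norm_le (exp (t * I)) ((1 - ε) * exp (Θ * I))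
    rw [norm_exp_ofReal_mul_I, norm_one_sub_mul_exp hε1] at this
    linarith
  rw [poissonKernel_zero_exp, norm_one_sub_mul_exp hε1, inv_eq_one_div,
    div_le_div_iff₀ (by positivity) (pow_pos (hε.trans_le hden_pos) 2)]
  nlinarith

lemma measureReal_closedBall_le_mul_integral_poissonKernel (μ : Measure ℝ) [IsFiniteMeasure μ]
    {ε : ℝ} (hε : 0 < ε) (hε1 : ε < 1) (Θ : ℝ) :
    μ.real (closedBall Θ ε) ≤
      2 * ε * ∫ t, poissonKernel 0 ((1 - ε) * exp (Θ * I)) (exp (t * I)) ∂μ := by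
  set P := fun t : ℝ ↦ poissonKernel 0 ((1 - ε) * exp (Θ * I)) (exp (t * I))
  have hw : ‖(1 - ε) * exp (Θ * I)‖ < 1 := by rw [norm_one_sub_mul_exp hε1.le]; linarith
  have hball : closedBall Θ ε ⊆ {t | (2 * ε)⁻¹ ≤ P t} := fun t ht ↦
    inv_two_mul_le_poissonKernel hε hε1.le (by rwa [mem_closedBall, Real.dist_eq] at ht)
  have markov := mul_meas_ge_le_integral_of_nonneg
    (.of_forall fun t ↦ poissonKernel_zero_exp_nonneg hw.le t)
    (integrable_poissonKernel_zero_exp μ hw) (2 * ε)⁻¹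
  calc μ.real (closedBall Θ ε) = 2 * ε * ((2 * ε)⁻¹ * μ.real (closedBall Θ ε)) := by field_simp
    _ ≤ 2 * ε * ((2 * ε)⁻¹ * μ.real {t | (2 * ε)⁻¹ ≤ P t}) := by
        gcongr; exact measure_ne_top μ _
    _ ≤ 2 * ε * ∫ t, P t ∂μ := by gcongr

theorem holder_continuity_from_caratheodory_bound_general
    (μ : Measure ℝ) [IsFiniteMeasure μ]
    (F : ℂ → ℂ)
    (hF : ∀ z, F z = ∫ θ, (Complex.exp (θ * Complex.I) + z) /
      (Complex.exp (θ * Complex.I) - z) ∂μ)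
    (β C : ℝ) (hC : 0 < C)
    (S : Set ℝ)
    (hbound : ∃ ε₀ > 0, ∀ ε : ℝ, 0 < ε → ε < ε₀ → ∀ Θ ∈ S,
      (F ((1 - ε) * Complex.exp (Θ * Complex.I))).re ≤ C * ε ^ (β - 1)) :
    ∃ C' > 0, ∃ ε₁ > 0, ∀ ε : ℝ, 0 < ε → ε < ε₁ → ∀ Θ ∈ S,
      (μ {t : ℝ | |t - Θ| ≤ ε}).toReal ≤ C' * ε ^ β := by
  obtain ⟨ε₀, hε₀, hb⟩ := hbound
  refine ⟨2 * C, by positivity, min ε₀ 1, by positivity, fun ε hε hεε₁ Θ hΘ ↦ ?_⟩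
  have hε1 : ε < 1 := hεε₁.trans_le (min_le_right _ _)
  have hw : ‖(1 - ε) * exp (Θ * I)‖ < 1 := by rw [norm_one_sub_mul_exp hε1.le]; linarith
  have hRe := hb ε hε (hεε₁.trans_le (min_le_left _ _)) Θ hΘ
  simp only [hF, ← herglotzRieszKernel_zero_apply, re_integral_herglotzRieszKernel_zero_exp μ hw]
    at hRe
  have hball : {t : ℝ | |t - Θ| ≤ ε} = closedBall Θ ε := by
    ext t; rw [mem_closedBall, Real.dist_eq]; rfl
  calc (μ {t : ℝ | |t - Θ| ≤ ε}).toReal = μ.real (closedBall Θ ε) := by rw [hball]; rfl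
    _ ≤ 2 * ε * (C * ε ^ (β - 1)) :=
      (measureReal_closedBall_le_mul_integral_poissonKernel μ hε hε1 Θ).trans (by gcongr)
    _ = 2 * C * ε ^ β := by rw [Real.rpow_sub_one hε.ne']; field_simp

theorem holder_continuity_from_caratheodory_bound
    (μ : Measure ℝ) [IsFiniteMeasure μ]
    (F : ℂ → ℂ)
    (hF : ∀ z, F z = ∫ θ, (Complex.exp (θ * Complex.I) + z) /
      (Complex.exp (θ * Complex.I) - z) ∂μ)
    (β C : ℝ) (hβ : 0 < β) (hβ1 : β ≤ 1) (hC : 0 < C)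
    (S : Set ℝ) (hS : IsClosed S)
    (hbound : ∃ ε₀ > 0, ∀ ε : ℝ, 0 < ε → ε < ε₀ → ∀ Θ ∈ S,
      (F ((1 - ε) * Complex.exp (Θ * Complex.I))).re ≤ C * ε ^ (β - 1)) :
    ∃ C' > 0, ∃ ε₁ > 0, ∀ ε : ℝ, 0 < ε → ε < ε₁ → ∀ Θ ∈ S,
      (μ {t : ℝ | |t - Θ| ≤ ε}).toReal ≤ C' * ε ^ β :=
  holder_continuity_from_caratheodory_bound_general μ F hF β C hC S hbound
end

section
/- Let γ₁, γ₂ > 0 with γ₁ ≤ γ₂ and β = 2γ₁/(γ₁+γ₂). Suppose φ, ψ : [1,∞) → (0,∞) satisfy the two-sided power-law bounds C₁L^{γ₁} ≤ φ(L), ψ(L) ≤ C₂L^{γ₂}, and suppose x(r) ≥ 1 is defined for r ∈ (0,1) by the relation (1-r)·φ(x(r))·ψ(x(r)) = √2. Then there is a constant C₃ such that ψ(x(r))/φ(x(r)) ≤ C₃ (1-r)^{β-1} for all r close enough to 1. -/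
/-!
Write `s = 1 - r`, `X = x r` and `P = ψ X / φ X`. The relation `s φ ψ = √2` gives two expressions
`P = √2 / (s φ²) = s ψ² / √2`; the lower bound on `φ` and the upper bound on `ψ` turn them into
`P ≲ s⁻¹ X^(-2γ₁)` and `P ≲ s X^(2γ₂)`. The weighted geometric mean of these two bounds with
weights `γ₂/(γ₁+γ₂)` and `γ₁/(γ₁+γ₂)` is the one in which the powers of `X` cancel, leaving
`P ≲ s^((γ₁-γ₂)/(γ₁+γ₂)) = s^(β-1)`.
-/

open Real

lemma le_rpow_mul_rpow_one_sub_of_le_of_le {p A B θ : ℝ} (hp : 0 ≤ p) (hA : p ≤ A) (hB : p ≤ B)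
    (hθ₀ : 0 ≤ θ) (hθ₁ : θ ≤ 1) : p ≤ A ^ θ * B ^ (1 - θ) :=
  calc p = p ^ θ * p ^ (1 - θ) := by rw [← rpow_add' hp (by simp), add_sub_cancel, rpow_one]
    _ ≤ A ^ θ * B ^ (1 - θ) := by
      have := hp.trans hA
      gcongr

lemma le_mul_rpow_of_le_div_rpow_of_le_mul_rpow {p a b s X u v : ℝ} (hp : 0 ≤ p) (ha : 0 ≤ a)
    (hb : 0 ≤ b) (hs : 0 < s) (hX : 0 < X) (hu : 0 < u) (hv : 0 < v)
    (h₁ : p ≤ a / (s * X ^ u)) (h₂ : p ≤ b * s * X ^ v) :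
    p ≤ a ^ (v / (u + v)) * b ^ (u / (u + v)) * s ^ ((u - v) / (u + v)) := by
  have huv : 0 < u + v := by linarith
  have hθ : 1 - v / (u + v) = u / (u + v) := by field_simp; ring
  have key := le_rpow_mul_rpow_one_sub_of_le_of_le (θ := v / (u + v)) hp h₁ h₂ (by positivity)
    (div_le_one_of_le₀ (by linarith) huv.le)
  rw [hθ] at key
  convert key using 1
  have hXexp : u * (v / (u + v)) = v * (u / (u + v)) := by ring
  have hsexp : s ^ ((u - v) / (u + v)) = s ^ (u / (u + v)) / s ^ (v / (u + v)) := by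
    rw [← rpow_sub hs]; congr 1; ring
  rw [div_rpow ha (by positivity), mul_rpow hs.le (by positivity),
    mul_rpow (by positivity) (by positivity), mul_rpow hb hs.le, ← rpow_mul hX.le,
    ← rpow_mul hX.le, hXexp, hsexp]
  field_simp

lemma mul_rpow_sq {c X : ℝ} (hX : 0 ≤ X) (γ : ℝ) : (c * X ^ γ) ^ 2 = c ^ 2 * X ^ (2 * γ) := by
  rw [mul_comm 2 γ, rpow_mul hX, rpow_two, mul_pow]

theorem jitomirskaya_last_ratio_bound_general
    (γ₁ γ₂ : ℝ) (hγ₁ : 0 < γ₁) (hγ₂ : 0 < γ₂)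
    (β : ℝ) (hβ : β = 2 * γ₁ / (γ₁ + γ₂))
    (φ ψ : ℝ → ℝ) (C₁ C₂ : ℝ) (hC₁ : 0 < C₁) (hC₂ : 0 < C₂)
    (hφ : ∀ L ≥ (1 : ℝ), C₁ * L ^ γ₁ ≤ φ L ∧ φ L ≤ C₂ * L ^ γ₂)
    (hψ : ∀ L ≥ (1 : ℝ), C₁ * L ^ γ₁ ≤ ψ L ∧ ψ L ≤ C₂ * L ^ γ₂)
    (x : ℝ → ℝ) (hx1 : ∀ r ∈ Set.Ioo (0 : ℝ) 1, 1 ≤ x r)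
    (hxr : ∀ r ∈ Set.Ioo (0 : ℝ) 1,
      (1 - r) * φ (x r) * ψ (x r) = Real.sqrt 2) :
    ∃ C₃ > 0, ∃ r₀ ∈ Set.Ioo (0 : ℝ) 1, ∀ r, r₀ < r → r < 1 →
      ψ (x r) / φ (x r) ≤ C₃ * (1 - r) ^ (β - 1) := by
  refine ⟨(√2 / C₁ ^ 2) ^ (2 * γ₂ / (2 * γ₁ + 2 * γ₂)) *
    (C₂ ^ 2 / √2) ^ (2 * γ₁ / (2 * γ₁ + 2 * γ₂)), by positivity,
    1 / 2, by norm_num, fun r hr₀ hr₁ => ?_⟩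
  have hr : r ∈ Set.Ioo (0 : ℝ) 1 := ⟨by linarith, hr₁⟩
  have hs : 0 < 1 - r := by linarith
  have hX := hx1 r hr
  have hrel := hxr r hr
  generalize x r = X at hX hrel ⊢
  obtain ⟨hφ_lower, -⟩ := hφ X hX
  obtain ⟨hψ_lower, hψ_upper⟩ := hψ X hX
  have hφ₀ : 0 < φ X := lt_of_lt_of_le (by positivity) hφ_lower
  have hψ₀ : 0 < ψ X := lt_of_lt_of_le (by positivity) hψ_lower
  have h₁ : ψ X / φ X ≤ (√2 / C₁ ^ 2) / ((1 - r) * X ^ (2 * γ₁)) :=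
    calc ψ X / φ X = √2 / ((1 - r) * φ X ^ 2) := by rw [← hrel]; field_simp
      _ ≤ √2 / ((1 - r) * (C₁ * X ^ γ₁) ^ 2) := by gcongr
      _ = (√2 / C₁ ^ 2) / ((1 - r) * X ^ (2 * γ₁)) := by
        rw [mul_rpow_sq (by linarith)]; field_simp
  have h₂ : ψ X / φ X ≤ (C₂ ^ 2 / √2) * (1 - r) * X ^ (2 * γ₂) :=
    calc ψ X / φ X = (1 - r) * ψ X ^ 2 / √2 := by rw [← hrel]; field_simp
      _ ≤ (1 - r) * (C₂ * X ^ γ₂) ^ 2 / √2 := by gcongr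
      _ = (C₂ ^ 2 / √2) * (1 - r) * X ^ (2 * γ₂) := by rw [mul_rpow_sq (by linarith)]; ring
  have hexp : (2 * γ₁ - 2 * γ₂) / (2 * γ₁ + 2 * γ₂) = β - 1 := by rw [hβ]; field_simp; ring
  rw [← hexp]
  exact le_mul_rpow_of_le_div_rpow_of_le_mul_rpow (by positivity) (by positivity) (by positivity)
    hs (by linarith) (by positivity) (by positivity) h₁ h₂

theorem jitomirskaya_last_ratio_bound
    (γ₁ γ₂ : ℝ) (hγ₁ : 0 < γ₁) (hγ₂ : 0 < γ₂) (hγ : γ₁ ≤ γ₂)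
    (β : ℝ) (hβ : β = 2 * γ₁ / (γ₁ + γ₂))
    (φ ψ : ℝ → ℝ) (C₁ C₂ : ℝ) (hC₁ : 0 < C₁) (hC₂ : 0 < C₂)
    (hφ : ∀ L ≥ (1 : ℝ), C₁ * L ^ γ₁ ≤ φ L ∧ φ L ≤ C₂ * L ^ γ₂)
    (hψ : ∀ L ≥ (1 : ℝ), C₁ * L ^ γ₁ ≤ ψ L ∧ ψ L ≤ C₂ * L ^ γ₂)
    (x : ℝ → ℝ) (hx1 : ∀ r ∈ Set.Ioo (0 : ℝ) 1, 1 ≤ x r)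
    (hxr : ∀ r ∈ Set.Ioo (0 : ℝ) 1,
      (1 - r) * φ (x r) * ψ (x r) = Real.sqrt 2) :
    ∃ C₃ > 0, ∃ r₀ ∈ Set.Ioo (0 : ℝ) 1, ∀ r, r₀ < r → r < 1 →
      ψ (x r) / φ (x r) ≤ C₃ * (1 - r) ^ (β - 1) :=
  jitomirskaya_last_ratio_bound_general γ₁ γ₂ hγ₁ hγ₂ β hβ φ ψ C₁ C₂ hC₁ hC₂ hφ hψ x hx1 hxr
end
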